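/- Let n ≥ 1, s ∈ (0,1), let Ω ⊆ ℝⁿ be a bounded measurable set with 0 < |Ω| < ∞, and let u : ℝⁿ → ℝ be measurable and bounded on Ω. Then (∫_Ω u(y)|x−y|^{−(n+2s)} dy) / (∫_Ω |x−y|^{−(n+2s)} dy) → (1/|Ω|) ∫_Ω u(y) dy as |x| → ∞. -/

import Mathlib

/-!
Multiplying numerator and denominator by `‖x‖ ^ p` turns both into integrals against the weight
`(‖x‖ / dist x y) ^ p`. This weight tends to `1` for each `y`, and it lies below `2 ^ |p|` on
`Ω` once `‖x‖ ≥ 2R` with `Ω ⊆ closedBall 0 R`, so by dominated convergence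
the numerator tends to `∫_Ω u` and the denominator to `|Ω|`.
-/

open MeasureTheory Filter Bornology Topology

lemma Real.rpow_le_rpow_abs_of_inv_le_of_le {c r : ℝ} (hc : 0 < c) (hcr : c⁻¹ ≤ r)
    (hrc : r ≤ c) (p : ℝ) : r ^ p ≤ c ^ |p| := by
  have hr : 0 < r := (inv_pos.2 hc).trans_le hcr
  rcases le_or_gt 0 p with hp | hp
  · rw [abs_of_nonneg hp]
    exact Real.rpow_le_rpow hr.le hrc hp
  · rw [abs_of_neg hp, ← inv_inv r, ← Real.rpow_neg_eq_inv_rpow]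
    exact Real.rpow_le_rpow (inv_nonneg.2 hr.le) (inv_le_of_inv_le₀ hc hcr) (neg_nonneg.2 hp.le)

instance isCountablyGenerated_cobounded {E : Type*} [SeminormedAddCommGroup E] :
    (cobounded E).IsCountablyGenerated :=
  comap_norm_atTop (E := E) ▸ inferInstance

section
variable {E : Type*} [NormedAddCommGroup E]

lemma tendsto_norm_div_dist_rpow_cobounded (y : E) (p : ℝ) :
    Tendsto (fun x => (‖x‖ / dist x y) ^ p) (cobounded E) (𝓝 1) := by
  have hnorm := tendsto_norm_cobounded_atTop (E := E)
  have hdiff : Tendsto (fun x => (dist x y - ‖x‖) / ‖x‖) (cobounded E) (𝓝 0) := by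
    refine squeeze_zero_norm' ?_ ((tendsto_const_nhds (x := ‖y‖)).div_atTop hnorm)
    filter_upwards [eventually_cobounded_le_norm 1] with x hx
    rw [norm_div, norm_norm, dist_eq_norm]
    gcongr
    simpa using abs_norm_sub_norm_le (x - y) x
  have hratio : Tendsto (fun x => dist x y / ‖x‖) (cobounded E) (𝓝 1) := by
    refine (zero_add (1 : ℝ) ▸ hdiff.add_const 1).congr' ?_
    filter_upwards [eventually_cobounded_le_norm 1] with x hx
    field_simp
    ring
  simpa using (hratio.inv₀ one_ne_zero).rpow_const (p := p) (Or.inl (by norm_num))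

lemma norm_div_dist_rpow_le_two_rpow_abs {x y : E} {R : ℝ} (hy : ‖y‖ ≤ R) (hx : 2 * R ≤ ‖x‖)
    (hx0 : x ≠ 0) (p : ℝ) : (‖x‖ / dist x y) ^ p ≤ 2 ^ |p| := by
  have hxpos : 0 < ‖x‖ := norm_pos_iff.2 hx0
  have hlow : ‖x‖ / 2 ≤ dist x y := by
    rw [dist_eq_norm]; linarith [norm_sub_norm_le x y]
  have hhigh : dist x y ≤ 2 * ‖x‖ := by
    rw [dist_eq_norm]; linarith [norm_sub_le x y]
  refine Real.rpow_le_rpow_abs_of_inv_le_of_le two_pos ?_ ?_ p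
  · rw [le_div_iff₀ (by linarith)]; linarith
  · rw [div_le_iff₀ (by linarith)]; linarith

lemma dist_rpow_neg_eq_norm_rpow_neg_mul {x : E} (hx : x ≠ 0) (y : E) (p : ℝ) :
    dist x y ^ (-p) = ‖x‖ ^ (-p) * (‖x‖ / dist x y) ^ p := by
  have hxp : ‖x‖ ^ p ≠ 0 := by positivity
  rw [Real.rpow_neg dist_nonneg, Real.rpow_neg (norm_nonneg x),
    Real.div_rpow (norm_nonneg x) dist_nonneg]
  field_simp

variable [MeasurableSpace E] [OpensMeasurableSpace E] {μ : Measure E} {Ω : Set E}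

lemma tendsto_setIntegral_mul_norm_div_dist_rpow (hΩ : IsBounded Ω) {v : E → ℝ}
    (hv : IntegrableOn v Ω μ) (p : ℝ) :
    Tendsto (fun x => ∫ y in Ω, v y * (‖x‖ / dist x y) ^ p ∂μ) (cobounded E)
      (𝓝 (∫ y in Ω, v y ∂μ)) := by
  obtain ⟨R, hR⟩ := hΩ.subset_closedBall 0
  have hweight (x : E) : Measurable fun y => (‖x‖ / dist x y) ^ p :=
    (measurable_const.div (continuous_const.dist continuous_id).measurable).pow_const p
  refine tendsto_integral_filter_of_dominated_convergence (fun y => |v y| * 2 ^ |p|)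
    (.of_forall fun x => hv.1.mul (hweight x).aestronglyMeasurable) ?_
    (hv.abs.mul_const _) (.of_forall fun y => by
      simpa using (tendsto_norm_div_dist_rpow_cobounded y p).const_mul (v y))
  filter_upwards [eventually_cobounded_le_norm (2 * R), eventually_ne_cobounded 0] with x hx hx0
  refine ae_restrict_of_ae_restrict_of_subset hR
    (ae_restrict_of_forall_mem Metric.isClosed_closedBall.measurableSet fun y hy => ?_)
  rw [norm_mul, Real.norm_eq_abs, Real.norm_of_nonneg (by positivity)]
  gcongr
  exact norm_div_dist_rpow_le_two_rpow_abs (by simpa using hy) hx hx0 p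

lemma tendsto_setIntegral_mul_dist_rpow_neg_div (hΩ : IsBounded Ω) (hΩ0 : μ Ω ≠ 0)
    (hΩfin : μ Ω ≠ ⊤) {v : E → ℝ} (hv : IntegrableOn v Ω μ) (p : ℝ) :
    Tendsto (fun x => (∫ y in Ω, v y * dist x y ^ (-p) ∂μ) / ∫ y in Ω, dist x y ^ (-p) ∂μ)
      (cobounded E) (𝓝 ((μ.real Ω)⁻¹ * ∫ y in Ω, v y ∂μ)) := by
  have hmass : Tendsto (fun x => ∫ y in Ω, (‖x‖ / dist x y) ^ p ∂μ) (cobounded E)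
      (𝓝 (μ.real Ω)) := by
    simpa using
      tendsto_setIntegral_mul_norm_div_dist_rpow hΩ (integrableOn_const hΩfin (C := (1 : ℝ))) p
  rw [inv_mul_eq_div]
  refine ((tendsto_setIntegral_mul_norm_div_dist_rpow hΩ hv p).div hmass
    (measureReal_ne_zero_iff hΩfin |>.2 hΩ0)).congr' ?_
  filter_upwards [eventually_ne_cobounded 0] with x hx0
  simp only [dist_rpow_neg_eq_norm_rpow_neg_mul hx0, mul_left_comm (v _), integral_const_mul]
  exact (mul_div_mul_left _ _ (by positivity)).symm

end

theorem weighted_average_tendsto_mean_general (n : ℕ) (s : ℝ)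
    (Ω : Set (EuclideanSpace ℝ (Fin n))) (hΩ : MeasurableSet Ω)
    (hΩb : Bornology.IsBounded Ω) (hΩpos : 0 < volume Ω) (hΩfin : volume Ω < ⊤)
    (u : EuclideanSpace ℝ (Fin n) → ℝ) (hu : Measurable u) (M : ℝ)
    (hM : ∀ y ∈ Ω, |u y| ≤ M) :
    Tendsto (fun x : EuclideanSpace ℝ (Fin n) =>
        (∫ y in Ω, u y * dist x y ^ (-((n : ℝ) + 2 * s))) /
          ∫ y in Ω, dist x y ^ (-((n : ℝ) + 2 * s)))
      (Filter.comap (fun x => ‖x‖) atTop)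
      (nhds ((volume Ω).toReal⁻¹ * ∫ y in Ω, u y)) := by
  have hu_int : IntegrableOn u Ω volume :=
    Measure.integrableOn_of_bounded hΩfin.ne hu.aestronglyMeasurable
      (ae_restrict_of_forall_mem hΩ hM)
  rw [comap_norm_atTop]
  exact tendsto_setIntegral_mul_dist_rpow_neg_div hΩb hΩpos.ne' hΩfin.ne hu_int _

/-- As `|x| → ∞`, the weighted average of a bounded measurable function `u` against the
kernel `|x-y|^{-(n+2s)}` over a bounded set `Ω` of positive finite measure tends to the
mean value `(1/|Ω|) ∫_Ω u`. -/
theorem weighted_average_tendsto_mean (n : ℕ) (hn : 1 ≤ n) (s : ℝ)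
    (hs : s ∈ Set.Ioo (0 : ℝ) 1)
    (Ω : Set (EuclideanSpace ℝ (Fin n))) (hΩ : MeasurableSet Ω)
    (hΩb : Bornology.IsBounded Ω) (hΩpos : 0 < volume Ω) (hΩfin : volume Ω < ⊤)
    (u : EuclideanSpace ℝ (Fin n) → ℝ) (hu : Measurable u) (M : ℝ)
    (hM : ∀ y ∈ Ω, |u y| ≤ M) :
    Tendsto (fun x : EuclideanSpace ℝ (Fin n) =>
        (∫ y in Ω, u y * dist x y ^ (-((n : ℝ) + 2 * s))) /
          ∫ y in Ω, dist x y ^ (-((n : ℝ) + 2 * s)))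
      (Filter.comap (fun x => ‖x‖) atTop)
      (nhds ((volume Ω).toReal⁻¹ * ∫ y in Ω, u y)) :=
  weighted_average_tendsto_mean_general n s Ω hΩ hΩb hΩpos hΩfin u hu M hM
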